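/- (The coaction of M_{ℓ,p} preserves the A_{ℓ,p}-relations.) Let A and B be unital associative k-algebras. Suppose M : {0,1,2,3}×{0,1,2,3} → A satisfies the M_{ℓ,p}-relations and x : {0,1,2,3} → B satisfies the A_{ℓ,p}-relations. Then the family y_μ := Σ_{ν=0}^{3} M_{μν} ⊗ x_ν of elements of the k-algebra A ⊗_k B satisfies the A_{ℓ,p}-relations: y_μ y_ν = ℓ_{μν} y_ν y_μ + p_{μν} y_{ν'} y_{μ'} for all μ,ν ∈ {0,1,2,3}. -/
import Mathlib


/-- For distinct `μ ν`, `pr μ ν = (μ', ν')`, the unique pair with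
`{μ', ν'} = {0,1,2,3} \ {μ, ν}` and `μ' > ν'` iff `μ > ν`; `pr μ μ = (μ, μ)`. -/
def pr : Fin 4 → Fin 4 → Fin 4 × Fin 4 :=
  ![![(0,0),(2,3),(1,3),(1,2)],
    ![(3,2),(1,1),(0,3),(0,2)],
    ![(3,1),(3,0),(2,2),(0,1)],
    ![(2,1),(2,0),(1,0),(3,3)]]

/-- The table `ν ↦ (ν̃, μ_ν, μ̃_ν)`. -/
def tnu : Fin 4 → Fin 4 × Fin 4 × Fin 4 :=
  ![(1,2,3),(0,3,2),(3,0,1),(2,1,0)]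

/-- The conditions on the parameters `ℓ_{μν}`, `p_{μν}` of Definition 2.1. -/
def GoodParams {k : Type*} [Field k] (ℓ p : Fin 4 → Fin 4 → k) : Prop :=
  (∀ μ : Fin 4, ℓ μ μ = 1) ∧
  (∀ μ ν : Fin 4, ℓ μ ν = ℓ ν μ) ∧
  (∀ μ ν : Fin 4, ℓ (pr μ ν).1 (pr μ ν).2 = ℓ μ ν) ∧
  (∀ μ ν : Fin 4, p μ ν = - p ν μ) ∧
  (∀ μ ν : Fin 4, ℓ μ ν ^ 2 + p μ ν * p (pr μ ν).2 (pr μ ν).1 = 1)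

/-- `x` satisfies the `A_{ℓ,p}`-relations: `x_μ x_ν = ℓ_{μν} x_ν x_μ + p_{μν} x_{ν'} x_{μ'}`. -/
def AlpRel {k A : Type*} [Field k] [Ring A] [Algebra k A]
    (ℓ p : Fin 4 → Fin 4 → k) (x : Fin 4 → A) : Prop :=
  ∀ μ ν : Fin 4,
    x μ * x ν = ℓ μ ν • (x ν * x μ) + p μ ν • (x (pr μ ν).2 * x (pr μ ν).1)

/-- `M` satisfies the `M_{ℓ,p}`-relations:
`M_{μα} M_{νβ} = ℓ_{μν} ℓ_{βα} M_{νβ} M_{μα} + p_{μν} ℓ_{βα} M_{ν'β} M_{μ'α}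
+ ℓ_{μν} p_{β'α'} M_{νβ'} M_{μα'} + p_{μν} p_{β'α'} M_{ν'β'} M_{μ'α'}`. -/
def MlpRel {k A : Type*} [Field k] [Ring A] [Algebra k A]
    (ℓ p : Fin 4 → Fin 4 → k) (M : Fin 4 → Fin 4 → A) : Prop :=
  ∀ μ ν α β : Fin 4,
    M μ α * M ν β =
      (ℓ μ ν * ℓ β α) • (M ν β * M μ α) +
      (p μ ν * ℓ β α) • (M (pr μ ν).2 β * M (pr μ ν).1 α) +
      (ℓ μ ν * p (pr α β).2 (pr α β).1) • (M ν (pr α β).2 * M μ (pr α β).1) +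
      (p μ ν * p (pr α β).2 (pr α β).1) •
        (M (pr μ ν).2 (pr α β).2 * M (pr μ ν).1 (pr α β).1)

open scoped TensorProduct

private lemma pr_invol : ∀ a b : Fin 4, pr (pr a b).1 (pr a b).2 = (a, b) := by decide

private lemma pr_swap : ∀ a b : Fin 4, pr b a = ((pr a b).2, (pr a b).1) := by decide

private lemma pr_bij : Function.Bijective (fun q : Fin 4 × Fin 4 => pr q.1 q.2) :=
  Function.Involutive.bijective (fun q => by
    show pr (pr q.1 q.2).1 (pr q.1 q.2).2 = q
    rw [pr_invol])

section Aux
variable {k A B : Type*} [Field k] [Ring A] [Algebra k A] [Ring B] [Algebra k B]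

/-- The "first two terms" of the `M`-relation expansion, tensored with `x q.1 x q.2`. -/
private noncomputable def Fm (ℓ p : Fin 4 → Fin 4 → k) (M : Fin 4 → Fin 4 → A) (x : Fin 4 → B)
    (μ ν : Fin 4) (q : Fin 4 × Fin 4) : A ⊗[k] B :=
  (ℓ μ ν * ℓ q.2 q.1) • ((M ν q.2 * M μ q.1) ⊗ₜ[k] (x q.1 * x q.2)) +
  (p μ ν * ℓ q.2 q.1) • ((M (pr μ ν).2 q.2 * M (pr μ ν).1 q.1) ⊗ₜ[k] (x q.1 * x q.2))

/-- The "last two terms" of the `M`-relation expansion. -/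
private noncomputable def Gm (ℓ p : Fin 4 → Fin 4 → k) (M : Fin 4 → Fin 4 → A) (x : Fin 4 → B)
    (μ ν : Fin 4) (q : Fin 4 × Fin 4) : A ⊗[k] B :=
  (ℓ μ ν * p (pr q.1 q.2).2 (pr q.1 q.2).1) •
    ((M ν (pr q.1 q.2).2 * M μ (pr q.1 q.2).1) ⊗ₜ[k] (x q.1 * x q.2)) +
  (p μ ν * p (pr q.1 q.2).2 (pr q.1 q.2).1) •
    ((M (pr μ ν).2 (pr q.1 q.2).2 * M (pr μ ν).1 (pr q.1 q.2).1) ⊗ₜ[k] (x q.1 * x q.2))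

private noncomputable def Hm (ℓ p : Fin 4 → Fin 4 → k) (M : Fin 4 → Fin 4 → A) (x : Fin 4 → B)
    (μ ν : Fin 4) (q : Fin 4 × Fin 4) : A ⊗[k] B :=
  ℓ μ ν • ((M ν q.2 * M μ q.1) ⊗ₜ[k] (x q.2 * x q.1)) +
  p μ ν • ((M (pr μ ν).2 q.2 * M (pr μ ν).1 q.1) ⊗ₜ[k] (x q.2 * x q.1))

private lemma lem1 (ℓ p : Fin 4 → Fin 4 → k) (M : Fin 4 → Fin 4 → A) (hM : MlpRel ℓ p M)
    (x : Fin 4 → B) (μ ν : Fin 4) (q : Fin 4 × Fin 4) :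
    (M μ q.1 * M ν q.2) ⊗ₜ[k] (x q.1 * x q.2) =
      Fm ℓ p M x μ ν q + Gm ℓ p M x μ ν q := by
  rw [hM μ ν q.1 q.2]
  simp only [Fm, Gm, TensorProduct.add_tmul, TensorProduct.smul_tmul']
  abel

private lemma lem2 (ℓ p : Fin 4 → Fin 4 → k) (M : Fin 4 → Fin 4 → A)
    (x : Fin 4 → B) (hx : AlpRel ℓ p x) (μ ν : Fin 4) (q : Fin 4 × Fin 4) :
    Fm ℓ p M x μ ν q + Gm ℓ p M x μ ν (pr q.1 q.2) = Hm ℓ p M x μ ν q := by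
  simp only [Fm, Gm, Hm, pr_invol q.1 q.2, hx q.2 q.1, pr_swap q.1 q.2,
    TensorProduct.tmul_add, TensorProduct.tmul_smul, smul_add, smul_smul]
  module

private lemma prodsum (u v : Fin 4 → A ⊗[k] B) :
    (∑ a : Fin 4, u a) * (∑ b : Fin 4, v b) = ∑ q : Fin 4 × Fin 4, u q.1 * v q.2 := by
  rw [Fintype.sum_prod_type]
  exact Finset.sum_mul_sum _ _ _ _

end Aux

open scoped TensorProduct

/-- Theorem 5.6: if `M` satisfies the `M_{ℓ,p}`-relations and `x`
satisfies the `A_{ℓ,p}`-relations, then `y_μ := Σ_ν M_{μν} ⊗ x_ν` satisfies the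
`A_{ℓ,p}`-relations in `A ⊗[k] B`. -/
theorem stmt19 {k A B : Type*} [Field k] [CharZero k]
    [Ring A] [Algebra k A] [Ring B] [Algebra k B]
    (ℓ p : Fin 4 → Fin 4 → k) (hlp : GoodParams ℓ p)
    (M : Fin 4 → Fin 4 → A) (hM : MlpRel ℓ p M)
    (x : Fin 4 → B) (hx : AlpRel ℓ p x) :
    AlpRel ℓ p (fun μ => ∑ ν : Fin 4, M μ ν ⊗ₜ[k] x ν) := by
  intro μ ν
  show (∑ a : Fin 4, M μ a ⊗ₜ[k] x a) * (∑ b : Fin 4, M ν b ⊗ₜ[k] x b) =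
    ℓ μ ν • ((∑ a : Fin 4, M ν a ⊗ₜ[k] x a) * (∑ b : Fin 4, M μ b ⊗ₜ[k] x b)) +
    p μ ν • ((∑ a : Fin 4, M (pr μ ν).2 a ⊗ₜ[k] x a) * (∑ b : Fin 4, M (pr μ ν).1 b ⊗ₜ[k] x b))
  rw [prodsum, prodsum, prodsum]
  simp only [Algebra.TensorProduct.tmul_mul_tmul]
  calc ∑ q : Fin 4 × Fin 4, (M μ q.1 * M ν q.2) ⊗ₜ[k] (x q.1 * x q.2)
      = ∑ q : Fin 4 × Fin 4, (Fm ℓ p M x μ ν q + Gm ℓ p M x μ ν q) :=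
        Finset.sum_congr rfl (fun q _ => lem1 ℓ p M hM x μ ν q)
    _ = (∑ q : Fin 4 × Fin 4, Fm ℓ p M x μ ν q) + ∑ q : Fin 4 × Fin 4, Gm ℓ p M x μ ν q :=
        Finset.sum_add_distrib
    _ = (∑ q : Fin 4 × Fin 4, Fm ℓ p M x μ ν q) +
        ∑ q : Fin 4 × Fin 4, Gm ℓ p M x μ ν (pr q.1 q.2) := by
        rw [Fintype.sum_bijective _ pr_bij (fun q => Gm ℓ p M x μ ν (pr q.1 q.2))
          (Gm ℓ p M x μ ν) (fun q => rfl)]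
    _ = ∑ q : Fin 4 × Fin 4, Hm ℓ p M x μ ν q := by
        rw [← Finset.sum_add_distrib]
        exact Finset.sum_congr rfl (fun q _ => lem2 ℓ p M x hx μ ν q)
    _ = ℓ μ ν • ∑ q : Fin 4 × Fin 4, (M ν q.1 * M μ q.2) ⊗ₜ[k] (x q.1 * x q.2) +
        p μ ν • ∑ q : Fin 4 × Fin 4,
          (M (pr μ ν).2 q.1 * M (pr μ ν).1 q.2) ⊗ₜ[k] (x q.1 * x q.2) := by
        rw [← Equiv.sum_comp (Equiv.prodComm (Fin 4) (Fin 4))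
            (fun q : Fin 4 × Fin 4 => (M ν q.1 * M μ q.2) ⊗ₜ[k] (x q.1 * x q.2)),
          ← Equiv.sum_comp (Equiv.prodComm (Fin 4) (Fin 4))
            (fun q : Fin 4 × Fin 4 =>
              (M (pr μ ν).2 q.1 * M (pr μ ν).1 q.2) ⊗ₜ[k] (x q.1 * x q.2)),
          Finset.smul_sum, Finset.smul_sum, ← Finset.sum_add_distrib]
        exact Finset.sum_congr rfl (fun q _ => rfl)
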